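/- Fix 0 < H_− ≤ H_+ < 1. There exists a constant C, independent of H ∈ [H_−, H_+] and of k ≥ 2, such that for all λ with 0 < |λ| ≤ π, |f_{H,k}(λ) − f_{H,∞}(λ)| ≤ C |λ|^{min(2, 3−2H)} / k^{min(1, 2H)}, where f_{H,k} and f_{H,∞} are the spectral densities of the pre-averaged fBm increment sequences. In particular, f_{H,k} → f_{H,∞} uniformly in H ∈ [H_−, H_+] and λ ≠ 0 as k → ∞. -/

import Mathlib

/-!
Put `θ_j = (λ + 2πj) / (2k)`. Since `|λ + 2πj|^{-(3+2H)} = |λ + 2πj|^{-(1+2H)} / (4k²θ_j²)`,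
`f_{H,k} - f_{H,∞} = Γ(2H+1) sin(πH) (1 - cos λ)² k⁻² Σ_j (sin⁻² θ_j - θ_j⁻²) |λ + 2πj|^{-(1+2H)}`,
a series of nonnegative terms. When `2|j| < k`, `|θ_j| ≤ π/2` and `sin⁻² θ - θ⁻² ≤ 1` there, so
these terms contribute `O(λ⁴ (|λ|^{-1-2H} + 1) / k²)`. When `2|j| ≥ k`, drop `θ_j⁻²`: `θ_j` stays
at distance `≥ |λ|/(2k)` from `πℤ`, so `k² sin² θ_j ≥ λ²/π²`, and the tail
`Σ_{2|j| ≥ k} |j|^{-1-2H} = O(k^{-2H})` (integral test) leaves `O(λ² k^{-2H})`.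
Finally `(1 - cos λ)² ≤ λ⁴/4`, `|λ| ≤ π` and `Γ ≤ 2` on `[1, 3]` (convexity) turn this into
`O(|λ|^{min(2, 3-2H)} / k^{min(1, 2H)})` with a constant depending only on a lower bound for `H`.
-/

open Real

/-- `f_{H,k}(λ) = Γ(2H+1) sin(πH) Σ_{j∈ℤ} (1-cos λ)²/(k² sin²(λ/(2k)+πj/k)) |λ+2πj|^{-(1+2H)}`. -/
noncomputable def fHk (H : ℝ) (k : ℕ) (l : ℝ) : ℝ :=
  Real.Gamma (2 * H + 1) * Real.sin (π * H) *
    ∑' j : ℤ, (1 - Real.cos l) ^ 2 / ((k : ℝ) ^ 2 * Real.sin (l / (2 * k) + π * j / k) ^ 2)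
      * |l + 2 * π * j| ^ (-(1 + 2 * H))

/-- `f_{H,∞}(λ) = 4 Γ(2H+1) sin(πH) (1-cos λ)² Σ_{j∈ℤ} |λ+2πj|^{-(3+2H)}`. -/
noncomputable def fHinf (H l : ℝ) : ℝ :=
  4 * Real.Gamma (2 * H + 1) * Real.sin (π * H) * (1 - Real.cos l) ^ 2 *
    ∑' j : ℤ, |l + 2 * π * j| ^ (-(3 + 2 * H))

open Filter Topology

lemma mul_abs_le_two_mul_abs_add_mul_int {a y : ℝ} (hy : 2 * |y| ≤ a) (n : ℤ) :
    a * |(n : ℝ)| ≤ 2 * |y + a * n| := by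
  rcases eq_or_ne n 0 with rfl | hn
  · simp
  have hn1 : (1 : ℝ) ≤ |(n : ℝ)| := by exact_mod_cast Int.one_le_abs hn
  have ha : 0 ≤ a := by linarith [abs_nonneg y]
  have := abs_sub_abs_le_abs_add (a * n) y
  rw [abs_mul, abs_of_nonneg ha, add_comm] at this
  nlinarith [mul_le_mul_of_nonneg_left hn1 ha]

lemma abs_le_abs_add_mul_int {a y : ℝ} (hy : 2 * |y| ≤ a) (n : ℤ) : |y| ≤ |y + a * n| := by
  rcases eq_or_ne n 0 with rfl | hn
  · simp
  have hn1 : (1 : ℝ) ≤ |(n : ℝ)| := by exact_mod_cast Int.one_le_abs hn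
  nlinarith [mul_abs_le_two_mul_abs_add_mul_int hy n, abs_nonneg y]

lemma two_div_pi_mul_le_abs_sin {θ δ : ℝ} (h : ∀ n : ℤ, δ ≤ |θ - n * π|) :
    2 / π * δ ≤ |sin θ| := by
  set m := round (θ / π)
  have hm : |θ - m * π| ≤ π / 2 := by
    rw [show θ - m * π = (θ / π - m) * π by field_simp, abs_mul, abs_of_pos pi_pos]
    linarith [mul_le_mul_of_nonneg_right (abs_sub_round (θ / π)) pi_pos.le]
  calc 2 / π * δ ≤ 2 / π * |θ - m * π| := by gcongr; exact h m
    _ ≤ |sin (θ - m * π)| := mul_abs_le_abs_sin hm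
    _ = |sin θ| := by
        rw [sin_sub_int_mul_pi, abs_mul, abs_zpow, abs_neg, abs_one, one_zpow, one_mul]

lemma inv_sin_sq_sub_inv_sq_le_one {x : ℝ} (hx0 : x ≠ 0) (hx : |x| ≤ π / 2) :
    (sin x ^ 2)⁻¹ - (x ^ 2)⁻¹ ≤ 1 := by
  have hjordan := mul_abs_le_abs_sin hx
  have hcube := (abs_sub_abs_le_abs_sub x (sin x)).trans (abs_sub_sin_le x)
  have hsin_le := abs_sin_le_abs (x := x)
  have hu : 0 < |x| := abs_pos.mpr hx0
  have hs : 0 < |sin x| := lt_of_lt_of_le (by positivity) hjordan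
  have hpi : π ^ 2 ≤ 12 := by nlinarith [pi_lt_d2, pi_pos]
  rw [← sq_abs x, ← sq_abs (sin x), inv_sub_inv (by positivity) (by positivity),
    div_le_one (by positivity)]
  have h4 : 4 * |x| ^ 2 ≤ π ^ 2 * |sin x| ^ 2 := by
    have := pow_le_pow_left₀ (by positivity) hjordan 2
    rw [mul_pow, div_pow, div_mul_eq_mul_div, div_le_iff₀ (by positivity)] at this
    linarith
  -- Taylor gives `x² - sin² x ≤ x⁴/3`, Jordan gives `x² sin² x ≥ 4x⁴/π² ≥ x⁴/3`.
  have hdiff : |x| ^ 2 - |sin x| ^ 2 ≤ |x| ^ 3 / 6 * (2 * |x|) := by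
    nlinarith [mul_le_mul hcube (by linarith : |x| + |sin x| ≤ 2 * |x|) (by positivity)
      (by positivity)]
  nlinarith [mul_le_mul_of_nonneg_left h4 (sq_nonneg |x|),
    mul_le_mul_of_nonneg_right hpi (by positivity : 0 ≤ |x| ^ 2 * |sin x| ^ 2)]

lemma Gamma_le_two {x : ℝ} (hx : x ∈ Set.Icc 1 3) : Gamma x ≤ 2 := by
  have := convexOn_Gamma.le_max_of_mem_Icc (by norm_num : (1:ℝ) ∈ Set.Ioi 0)
    (by norm_num : (3:ℝ) ∈ Set.Ioi 0) hx
  have h3 : Gamma 3 = 2 := by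
    rw [show (3:ℝ) = (2:ℕ) + 1 by norm_num, Gamma_nat_eq_factorial]; norm_num
  rwa [Gamma_one, h3, max_eq_right one_le_two] at this

lemma tsum_nat_add_rpow_le {s : ℝ} (hs : 0 < s) {M : ℕ} (hM : 0 < M) :
    ∑' n : ℕ, ((n + M : ℕ) : ℝ) ^ (-(1 + s)) ≤ (1 + 1 / s) * (M : ℝ) ^ (-s) := by
  have hM0 : (0 : ℝ) < M := by exact_mod_cast hM
  have hM1 : (1 : ℝ) ≤ M := by exact_mod_cast hM
  have hintegral : ∑' n : ℕ, ((n + M + 1 : ℕ) : ℝ) ^ (-(1 + s)) ≤ (M : ℝ) ^ (-s) / s := by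
    have hanti : AntitoneOn (fun x : ℝ => x ^ (-(1 + s))) (Set.Ici M) :=
      fun x hx y _ hxy => rpow_le_rpow_of_nonpos (hM0.trans_le hx) hxy (by linarith)
    refine (hanti.tsum_comp_add_le_integral M (integrableOn_Ioi_rpow_of_lt (by linarith) hM0)
      fun t ht => rpow_nonneg (hM0.trans ht).le _).trans_eq ?_
    rw [integral_Ioi_rpow_of_lt (by linarith) hM0]
    ring_nf
  have hsum : Summable fun n : ℕ => ((n + M : ℕ) : ℝ) ^ (-(1 + s)) :=
    (summable_nat_add_iff M).mpr (summable_nat_rpow.mpr (by linarith))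
  have hfirst : (M : ℝ) ^ (-(1 + s)) ≤ (M : ℝ) ^ (-s) :=
    rpow_le_rpow_of_exponent_le hM1 (by linarith)
  rw [hsum.tsum_eq_zero_add]
  simp only [zero_add, add_right_comm _ 1 M]
  linarith [show (1 + 1 / s) * (M : ℝ) ^ (-s) = (M : ℝ) ^ (-s) + (M : ℝ) ^ (-s) / s by ring]

lemma summable_int_rpow_tail {s : ℝ} (hs : 0 < s) (x : ℝ) :
    Summable fun j : ℤ => if x ≤ |(j : ℝ)| then |(j : ℝ)| ^ (-(1 + s)) else 0 :=
  (summable_abs_int_rpow (by linarith : 1 < 1 + s)).of_nonneg_of_le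
    (fun j => by split_ifs <;> positivity) fun j => by split_ifs <;> [exact le_rfl; positivity]

lemma tsum_int_rpow_tail_le {s x : ℝ} (hs : 0 < s) (hx : 0 < x) :
    ∑' j : ℤ, (if x ≤ |(j : ℝ)| then |(j : ℝ)| ^ (-(1 + s)) else 0) ≤
      2 * (1 + 1 / s) * x ^ (-s) := by
  set M := ⌈x⌉₊
  have hM : 0 < M := Nat.ceil_pos.mpr hx
  set g : ℕ → ℝ := fun n => if M ≤ n then (n : ℝ) ^ (-(1 + s)) else 0
  have hg : Summable g := by
    refine (summable_nat_rpow.mpr (by linarith : -(1 + s) < -1)).of_nonneg_of_le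
      (fun n => by positivity) fun n => ?_
    simp only [g]; split_ifs <;> [exact le_rfl; positivity]
  have hF : ∀ j : ℤ, (if x ≤ |(j : ℝ)| then |(j : ℝ)| ^ (-(1 + s)) else 0) = g j.natAbs := by
    intro j
    simp only [g, M, Nat.ceil_le, Nat.cast_natAbs, Int.cast_abs]
  have hg0 : g 0 = 0 := if_neg hM.not_ge
  have hfold : ∑' j : ℤ, g j.natAbs = 2 * ∑' n, g n := by
    have hsum : Summable fun j : ℤ => g j.natAbs :=
      summable_int_iff_summable_nat_and_neg.mpr ⟨hg, by simpa using hg⟩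
    have := hsum.hasSum.nat_add_neg
    simp only [Int.natAbs_natCast, Int.natAbs_neg, Int.natAbs_zero, hg0, add_zero] at this
    rw [← this.tsum_eq, hg.tsum_add hg, two_mul]
  have htail : ∑' n, g n = ∑' n : ℕ, ((n + M : ℕ) : ℝ) ^ (-(1 + s)) := by
    rw [← hg.sum_add_tsum_nat_add M, Finset.sum_eq_zero fun n hn => if_neg (by simpa using hn)]
    simp only [g, zero_add, Nat.cast_add, le_add_iff_nonneg_left, zero_le, if_true]
  have hMx : (M : ℝ) ^ (-s) ≤ x ^ (-s) := rpow_le_rpow_of_nonpos hx (Nat.le_ceil x) (by linarith)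
  simp_rw [hF]
  rw [hfold, htail, mul_assoc]
  gcongr
  exact (tsum_nat_add_rpow_le hs hM).trans (by gcongr)

lemma rpow_le_pow_mul_rpow {y b a e : ℝ} {c : ℕ} (hy : 0 < y) (hyb : y ≤ b) (hb : 1 ≤ b)
    (hea : e ≤ a) (hac : a ≤ e + c) : y ^ a ≤ b ^ c * y ^ e := by
  calc y ^ a = y ^ (a - e) * y ^ e := by rw [← rpow_add hy, sub_add_cancel]
    _ ≤ b ^ (c : ℝ) * y ^ e := by
        gcongr
        exact (rpow_le_rpow hy.le hyb (by linarith)).trans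
          (rpow_le_rpow_of_exponent_le hb (by linarith))
    _ = b ^ c * y ^ e := by rw [rpow_natCast]

lemma one_sub_cos_sq_le (l : ℝ) : (1 - cos l) ^ 2 ≤ l ^ 4 / 4 := by
  have h := one_sub_sq_div_two_le_cos (x := l)
  have h0 := cos_le_one l
  nlinarith

noncomputable def aliasWeight (H l : ℝ) (j : ℤ) : ℝ := |l + 2 * π * j| ^ (-(1 + 2 * H))

noncomputable def aliasAngle (k : ℕ) (l : ℝ) (j : ℤ) : ℝ := l / (2 * k) + π * j / k

noncomputable def fHkTerm (H : ℝ) (k : ℕ) (l : ℝ) (j : ℤ) : ℝ :=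
  (1 - cos l) ^ 2 / ((k : ℝ) ^ 2 * sin (aliasAngle k l j) ^ 2) * aliasWeight H l j

noncomputable def fHinfTerm (H l : ℝ) (j : ℤ) : ℝ := |l + 2 * π * j| ^ (-(3 + 2 * H))

section Summands

variable {H l : ℝ} {k : ℕ}

lemma aliasWeight_nonneg (j : ℤ) : 0 ≤ aliasWeight H l j := rpow_nonneg (abs_nonneg _) _

lemma abs_le_abs_add_two_pi_mul (hl : |l| ≤ π) (j : ℤ) : |l| ≤ |l + 2 * π * j| :=
  abs_le_abs_add_mul_int (by linarith) j

lemma aliasWeight_le (hH : 0 ≤ 1 + 2 * H) (hl : |l| ≤ π) {j : ℤ} (hj : j ≠ 0) :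
    aliasWeight H l j ≤ |(j : ℝ)| ^ (-(1 + 2 * H)) := by
  have hj0 : 0 < |(j : ℝ)| := by positivity
  have := mul_abs_le_two_mul_abs_add_mul_int (y := l) (a := 2 * π) (by linarith) j
  unfold aliasWeight
  exact rpow_le_rpow_of_nonpos hj0 (by nlinarith [pi_gt_three]) (by linarith)

lemma add_two_pi_mul_eq (hk : 0 < k) (j : ℤ) : l + 2 * π * j = 2 * k * aliasAngle k l j := by
  unfold aliasAngle
  field_simp

lemma sin_aliasAngle_sq_ge (hk : 0 < k) (hl : |l| ≤ π) (j : ℤ) :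
    (l / (π * k)) ^ 2 ≤ sin (aliasAngle k l j) ^ 2 := by
  have hk0 : (0 : ℝ) < k := by exact_mod_cast hk
  have hdist : ∀ n : ℤ, |l| / (2 * k) ≤ |aliasAngle k l j - n * π| := by
    intro n
    have hshift : aliasAngle k l j - n * π = (l / 2 + π * ((j - n * k : ℤ) : ℝ)) / k := by
      unfold aliasAngle; push_cast; field_simp; ring
    have := abs_le_abs_add_mul_int (y := l / 2) (a := π) (by rw [abs_div]; linarith) (j - n * k)
    rw [abs_div, abs_two] at this
    rw [hshift, abs_div, abs_of_pos hk0, ← div_div]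
    gcongr
  have := two_div_pi_mul_le_abs_sin hdist
  rw [← sq_abs, ← sq_abs (sin _)]
  refine pow_le_pow_left₀ (abs_nonneg _) ?_ 2
  calc |l / (π * k)| = 2 / π * (|l| / (2 * k)) := by
        rw [abs_div, abs_of_pos (by positivity : 0 < π * k)]; field_simp
    _ ≤ _ := this

lemma fHinfTerm_eq (hl0 : l ≠ 0) (hl : |l| ≤ π) (j : ℤ) :
    fHinfTerm H l j = ((l + 2 * π * j) ^ 2)⁻¹ * aliasWeight H l j := by
  have hx : 0 < |l + 2 * π * j| := (abs_pos.mpr hl0).trans_le (abs_le_abs_add_two_pi_mul hl j)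
  unfold fHinfTerm aliasWeight
  rw [show -(3 + 2 * H) = -2 + -(1 + 2 * H) by ring, rpow_add hx, rpow_neg hx.le, ← sq_abs (_ + _)]
  norm_cast

lemma fHinfTerm_le (hl0 : l ≠ 0) (hl : |l| ≤ π) (j : ℤ) :
    fHinfTerm H l j ≤ (l ^ 2)⁻¹ * aliasWeight H l j := by
  rw [fHinfTerm_eq hl0 hl]
  refine mul_le_mul_of_nonneg_right (inv_anti₀ (by positivity) ?_) (aliasWeight_nonneg j)
  rw [← sq_abs l, ← sq_abs (_ + _)]
  exact pow_le_pow_left₀ (abs_nonneg _) (abs_le_abs_add_two_pi_mul hl j) 2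

lemma fHinfTerm_nonneg (j : ℤ) : 0 ≤ fHinfTerm H l j := rpow_nonneg (abs_nonneg _) _

lemma fHkTerm_le (hk : 0 < k) (hl0 : l ≠ 0) (hl : |l| ≤ π) (j : ℤ) :
    fHkTerm H k l j ≤ π ^ 2 * (1 - cos l) ^ 2 / l ^ 2 * aliasWeight H l j := by
  have hsin := sin_aliasAngle_sq_ge hk hl j
  have hk0 : (0 : ℝ) < k := by exact_mod_cast hk
  refine mul_le_mul_of_nonneg_right ?_ (aliasWeight_nonneg j)
  calc (1 - cos l) ^ 2 / ((k : ℝ) ^ 2 * sin (aliasAngle k l j) ^ 2)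
      ≤ (1 - cos l) ^ 2 / ((k : ℝ) ^ 2 * (l / (π * k)) ^ 2) := by gcongr
    _ = π ^ 2 * (1 - cos l) ^ 2 / l ^ 2 := by field_simp

lemma fHkTerm_sub_eq (hk : 0 < k) (hl0 : l ≠ 0) (hl : |l| ≤ π) (j : ℤ) :
    fHkTerm H k l j - 4 * (1 - cos l) ^ 2 * fHinfTerm H l j =
      (1 - cos l) ^ 2 / k ^ 2 * ((sin (aliasAngle k l j) ^ 2)⁻¹ - (aliasAngle k l j ^ 2)⁻¹) *
        aliasWeight H l j := by
  rw [fHinfTerm_eq hl0 hl, add_two_pi_mul_eq hk, fHkTerm]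
  ring

lemma fHkTerm_sub_nonneg (hk : 0 < k) (hl0 : l ≠ 0) (hl : |l| ≤ π) (j : ℤ) :
    0 ≤ fHkTerm H k l j - 4 * (1 - cos l) ^ 2 * fHinfTerm H l j := by
  have hk0 : (0 : ℝ) < k := by exact_mod_cast hk
  have hsin : 0 < sin (aliasAngle k l j) ^ 2 :=
    lt_of_lt_of_le (by positivity) (sin_aliasAngle_sq_ge hk hl j)
  rw [fHkTerm_sub_eq hk hl0 hl]
  have := inv_anti₀ hsin sin_sq_le_sq
  have := aliasWeight_nonneg (H := H) (l := l) j
  have : 0 ≤ (sin (aliasAngle k l j) ^ 2)⁻¹ - (aliasAngle k l j ^ 2)⁻¹ := by linarith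
  positivity

lemma abs_aliasAngle_le (hk : 0 < k) (hl : |l| ≤ π) {j : ℤ} (hj : 2 * |(j : ℝ)| < k) :
    |aliasAngle k l j| ≤ π / 2 := by
  have hk0 : (0 : ℝ) < k := by exact_mod_cast hk
  have hjk : 2 * |(j : ℝ)| + 1 ≤ k := by
    rw [← Int.cast_abs, ← Int.natCast_natAbs, Int.cast_natCast] at hj ⊢
    exact_mod_cast (show 2 * j.natAbs < k by exact_mod_cast hj)
  calc |aliasAngle k l j| ≤ |l / (2 * k)| + |π * j / k| := abs_add_le _ _
    _ = (|l| + 2 * π * |(j : ℝ)|) / (2 * k) := by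
        rw [abs_div, abs_div, abs_mul π, abs_of_pos pi_pos, abs_of_pos hk0,
          abs_of_pos (by positivity : (0 : ℝ) < 2 * k)]
        field_simp
    _ ≤ π * (2 * |(j : ℝ)| + 1) / (2 * k) := by gcongr; linarith
    _ ≤ π * k / (2 * k) := by gcongr
    _ = π / 2 := by field_simp

lemma fHkTerm_sub_le (hk : 0 < k) (hl0 : l ≠ 0) (hl : |l| ≤ π) (j : ℤ) :
    fHkTerm H k l j - 4 * (1 - cos l) ^ 2 * fHinfTerm H l j ≤
      (1 - cos l) ^ 2 / k ^ 2 * aliasWeight H l j +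
        π ^ 2 * (1 - cos l) ^ 2 / l ^ 2 *
          (if (k : ℝ) / 2 ≤ |(j : ℝ)| then aliasWeight H l j else 0) := by
  have hw := aliasWeight_nonneg (H := H) (l := l) j
  split_ifs with hj
  · have := fHinfTerm_nonneg (H := H) (l := l) j
    have := fHkTerm_le (H := H) hk hl0 hl j
    have : 0 ≤ (1 - cos l) ^ 2 / k ^ 2 * aliasWeight H l j := by positivity
    nlinarith [sq_nonneg (1 - cos l)]
  · have hθ : aliasAngle k l j ≠ 0 := by
      intro h
      have := abs_le_abs_add_two_pi_mul hl j
      rw [add_two_pi_mul_eq hk, h, mul_zero, abs_zero] at this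
      exact hl0 (abs_nonpos_iff.mp this)
    have := inv_sin_sq_sub_inv_sq_le_one hθ (abs_aliasAngle_le hk hl (by linarith))
    rw [fHkTerm_sub_eq hk hl0 hl, mul_zero, add_zero]
    gcongr
    exact mul_le_of_le_one_right (by positivity) this

lemma aliasWeight_le_ite (hH : 0 ≤ 1 + 2 * H) (hl : |l| ≤ π) (j : ℤ) :
    aliasWeight H l j ≤ (if j = 0 then |l| ^ (-(1 + 2 * H)) else 0) +
      (if 1 ≤ |(j : ℝ)| then |(j : ℝ)| ^ (-(1 + 2 * H)) else 0) := by
  rcases eq_or_ne j 0 with rfl | hj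
  · simp [aliasWeight, show ¬ (1 : ℝ) ≤ 0 by norm_num]
  · have : (1 : ℝ) ≤ |(j : ℝ)| := by exact_mod_cast Int.one_le_abs hj
    simpa [hj, this] using aliasWeight_le hH hl hj

lemma summable_aliasWeight (hH : 0 < H) (hl : |l| ≤ π) : Summable (aliasWeight H l) :=
  ((hasSum_ite_eq (0 : ℤ) _).summable.add (summable_int_rpow_tail (by positivity) 1))
    |>.of_nonneg_of_le aliasWeight_nonneg (aliasWeight_le_ite (by linarith) hl)

lemma tsum_aliasWeight_le (hH : 0 < H) (hl : |l| ≤ π) :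
    ∑' j, aliasWeight H l j ≤ |l| ^ (-(1 + 2 * H)) + 2 * (1 + 1 / (2 * H)) := by
  have htail := summable_int_rpow_tail (by positivity : 0 < 2 * H) 1
  calc ∑' j, aliasWeight H l j
      ≤ ∑' j : ℤ, ((if j = 0 then |l| ^ (-(1 + 2 * H)) else 0) +
          (if 1 ≤ |(j : ℝ)| then |(j : ℝ)| ^ (-(1 + 2 * H)) else 0)) :=
        (summable_aliasWeight hH hl).tsum_le_tsum (aliasWeight_le_ite (by linarith) hl)
          ((hasSum_ite_eq (0 : ℤ) _).summable.add htail)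
    _ = |l| ^ (-(1 + 2 * H)) +
          ∑' j : ℤ, (if 1 ≤ |(j : ℝ)| then |(j : ℝ)| ^ (-(1 + 2 * H)) else 0) := by
        rw [(hasSum_ite_eq (0 : ℤ) _).summable.tsum_add htail, tsum_ite_eq]
    _ ≤ |l| ^ (-(1 + 2 * H)) + 2 * (1 + 1 / (2 * H)) := by
        have := tsum_int_rpow_tail_le (by positivity : 0 < 2 * H) one_pos
        rw [one_rpow, mul_one] at this
        linarith

lemma tsum_aliasWeight_tail_le (hH : 0 < H) (hH1 : H ≤ 1) (hk : 0 < k) (hl : |l| ≤ π) :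
    ∑' j : ℤ, (if (k : ℝ) / 2 ≤ |(j : ℝ)| then aliasWeight H l j else 0) ≤
      8 * (1 + 1 / (2 * H)) * (k : ℝ) ^ (-(2 * H)) := by
  have hk0 : (0 : ℝ) < k := by exact_mod_cast hk
  have hle : ∀ j : ℤ, (if (k : ℝ) / 2 ≤ |(j : ℝ)| then aliasWeight H l j else 0) ≤
      if (k : ℝ) / 2 ≤ |(j : ℝ)| then |(j : ℝ)| ^ (-(1 + 2 * H)) else 0 := by
    intro j
    split_ifs with hj
    · refine aliasWeight_le (by linarith) hl fun h => ?_
      rw [h, Int.cast_zero, abs_zero] at hj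
      linarith
    · exact le_rfl
  have hhalf : ((k : ℝ) / 2) ^ (-(2 * H)) ≤ 4 * (k : ℝ) ^ (-(2 * H)) := by
    rw [div_rpow hk0.le zero_le_two, rpow_neg zero_le_two, div_inv_eq_mul, mul_comm]
    gcongr
    calc (2 : ℝ) ^ (2 * H) ≤ 2 ^ (2 : ℝ) := rpow_le_rpow_of_exponent_le one_le_two (by linarith)
      _ = 4 := by norm_num
  have hdom := summable_int_rpow_tail (by positivity : 0 < 2 * H) ((k : ℝ) / 2)
  calc _ ≤ ∑' j : ℤ, (if (k : ℝ) / 2 ≤ |(j : ℝ)| then |(j : ℝ)| ^ (-(1 + 2 * H)) else 0) :=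
        (hdom.of_nonneg_of_le
          (fun j => by split_ifs <;> [exact aliasWeight_nonneg j; exact le_rfl]) hle).tsum_le_tsum
          hle hdom
    _ ≤ 2 * (1 + 1 / (2 * H)) * ((k : ℝ) / 2) ^ (-(2 * H)) :=
        tsum_int_rpow_tail_le (by positivity) (by positivity)
    _ ≤ 2 * (1 + 1 / (2 * H)) * (4 * (k : ℝ) ^ (-(2 * H))) := by gcongr
    _ = 8 * (1 + 1 / (2 * H)) * (k : ℝ) ^ (-(2 * H)) := by ring

lemma tsum_fHkTerm_sub_bounds (hH : 0 < H) (hH1 : H ≤ 1) (hk : 0 < k) (hl0 : l ≠ 0)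
    (hl : |l| ≤ π) :
    0 ≤ ∑' j, fHkTerm H k l j - 4 * (1 - cos l) ^ 2 * ∑' j, fHinfTerm H l j ∧
      ∑' j, fHkTerm H k l j - 4 * (1 - cos l) ^ 2 * ∑' j, fHinfTerm H l j ≤
        (1 - cos l) ^ 2 / k ^ 2 * (|l| ^ (-(1 + 2 * H)) + 2 * (1 + 1 / (2 * H))) +
          π ^ 2 * (1 - cos l) ^ 2 / l ^ 2 * (8 * (1 + 1 / (2 * H)) * (k : ℝ) ^ (-(2 * H))) := by
  have hw := summable_aliasWeight hH hl
  have hA : Summable (fHkTerm H k l) :=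
    (hw.mul_left _).of_nonneg_of_le
      (fun j => by have := aliasWeight_nonneg (H := H) (l := l) j; unfold fHkTerm; positivity)
      (fHkTerm_le hk hl0 hl)
  have hB : Summable (fHinfTerm H l) :=
    (hw.mul_left _).of_nonneg_of_le fHinfTerm_nonneg (fHinfTerm_le hl0 hl)
  have htail :
      Summable fun j : ℤ => if (k : ℝ) / 2 ≤ |(j : ℝ)| then aliasWeight H l j else 0 := by
    have := aliasWeight_nonneg (H := H) (l := l)
    exact hw.of_nonneg_of_le (fun j => by split_ifs <;> [exact this j; exact le_rfl])
      fun j => by split_ifs <;> [exact le_rfl; exact this j]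
  have hdiff : ∑' j, fHkTerm H k l j - 4 * (1 - cos l) ^ 2 * ∑' j, fHinfTerm H l j =
      ∑' j, (fHkTerm H k l j - 4 * (1 - cos l) ^ 2 * fHinfTerm H l j) := by
    rw [hA.tsum_sub (hB.mul_left _), tsum_mul_left]
  rw [hdiff]
  refine ⟨tsum_nonneg (fHkTerm_sub_nonneg hk hl0 hl), ?_⟩
  calc _ ≤ ∑' j, ((1 - cos l) ^ 2 / k ^ 2 * aliasWeight H l j +
          π ^ 2 * (1 - cos l) ^ 2 / l ^ 2 *
            (if (k : ℝ) / 2 ≤ |(j : ℝ)| then aliasWeight H l j else 0)) :=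
        (hA.sub (hB.mul_left _)).tsum_le_tsum (fHkTerm_sub_le hk hl0 hl)
          ((hw.mul_left _).add (htail.mul_left _))
    _ = (1 - cos l) ^ 2 / k ^ 2 * ∑' j, aliasWeight H l j + π ^ 2 * (1 - cos l) ^ 2 / l ^ 2 *
          ∑' j : ℤ, (if (k : ℝ) / 2 ≤ |(j : ℝ)| then aliasWeight H l j else 0) := by
        rw [(hw.mul_left _).tsum_add (htail.mul_left _), tsum_mul_left, tsum_mul_left]
    _ ≤ _ := by
        gcongr
        · exact tsum_aliasWeight_le hH hl
        · exact tsum_aliasWeight_tail_le hH hH1 hk hl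

end Summands

lemma error_bound_le_rpow_div_rpow {H l : ℝ} {k : ℕ} (hH : 0 < H) (hH1 : H ≤ 1) (hk : 0 < k)
    (hl0 : 0 < |l|) (hl : |l| ≤ π) :
    (1 - cos l) ^ 2 / k ^ 2 * (|l| ^ (-(1 + 2 * H)) + 2 * (1 + 1 / (2 * H))) +
        π ^ 2 * (1 - cos l) ^ 2 / l ^ 2 * (8 * (1 + 1 / (2 * H)) * (k : ℝ) ^ (-(2 * H))) ≤
      3 * π ^ 6 * (1 + 1 / (2 * H)) * |l| ^ min 2 (3 - 2 * H) / (k : ℝ) ^ min 1 (2 * H) := by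
  set P := (1 - cos l) ^ 2
  set Q := 1 + 1 / (2 * H)
  set E := |l| ^ min 2 (3 - 2 * H)
  set K := (k : ℝ) ^ min 1 (2 * H)
  have hk1 : (1 : ℝ) ≤ k := by exact_mod_cast hk
  have hpi1 : 1 ≤ π := by linarith [pi_gt_three]
  have hQ : 1 ≤ Q := by simp only [Q]; linarith [show 0 < 1 / (2 * H) by positivity]
  have he0 : 0 ≤ min 2 (3 - 2 * H) := le_min zero_le_two (by linarith)
  have hE (a : ℝ) (h1 : min 2 (3 - 2 * H) ≤ a) (h2 : a ≤ 4) : |l| ^ a ≤ π ^ 4 * E :=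
    rpow_le_pow_mul_rpow hl0 hl hpi1 h1 (by push_cast; linarith)
  have hK0 : 0 < K := by positivity
  have hK2 : K ≤ (k : ℝ) ^ 2 := by
    simpa using rpow_le_rpow_of_exponent_le hk1 (min_le_left 1 (2 * H) |>.trans one_le_two)
  have hKs : (k : ℝ) ^ (-(2 * H)) ≤ K⁻¹ := by
    rw [rpow_neg (by positivity)]
    exact inv_anti₀ hK0 (rpow_le_rpow_of_exponent_le hk1 (min_le_right _ _))
  have hP := one_sub_cos_sq_le l
  have hl4 : |l| ^ (4 : ℝ) = l ^ 4 := by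
    rw [show (4 : ℝ) = (4 : ℕ) by norm_num, rpow_natCast, Even.pow_abs (by decide)]
  have hT1 : P * |l| ^ (-(1 + 2 * H)) ≤ π ^ 4 * E / 4 := by
    calc P * |l| ^ (-(1 + 2 * H)) ≤ |l| ^ (4 : ℝ) / 4 * |l| ^ (-(1 + 2 * H)) := by
          rw [hl4]; gcongr
      _ = |l| ^ (3 - 2 * H) / 4 := by rw [div_mul_eq_mul_div, ← rpow_add hl0]; ring_nf
      _ ≤ π ^ 4 * E / 4 := by gcongr; exact hE _ (min_le_right _ _) (by linarith)
  have hT2 : P ≤ π ^ 4 * E / 4 := by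
    refine hP.trans ?_
    have := hE 4 ((min_le_left _ _).trans (by norm_num)) le_rfl
    rw [hl4] at this
    linarith
  have hT3 : P / l ^ 2 ≤ π ^ 4 * E / 4 := by
    have hl2 : 0 < l ^ 2 := by rw [← sq_abs]; positivity
    calc P / l ^ 2 ≤ l ^ 4 / 4 / l ^ 2 := by gcongr
      _ = l ^ 2 / 4 := by field_simp
      _ ≤ π ^ 4 * E / 4 := by
          have := hE 2 (min_le_left _ _) (by norm_num)
          norm_num at this
          linarith
  have hPl : 0 ≤ P := by positivity
  calc P / k ^ 2 * (|l| ^ (-(1 + 2 * H)) + 2 * Q) +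
        π ^ 2 * P / l ^ 2 * (8 * Q * (k : ℝ) ^ (-(2 * H)))
      = (P * |l| ^ (-(1 + 2 * H)) + 2 * Q * P) / k ^ 2 +
          8 * π ^ 2 * Q * (P / l ^ 2) * (k : ℝ) ^ (-(2 * H)) := by ring
    _ ≤ (π ^ 4 * E / 4 + 2 * Q * (π ^ 4 * E / 4)) / K +
          8 * π ^ 2 * Q * (π ^ 4 * E / 4) * K⁻¹ := by gcongr
    _ = π ^ 4 * E / K * (1 / 4 + Q / 2 + 2 * π ^ 2 * Q) := by ring
    _ ≤ π ^ 4 * E / K * (3 * π ^ 2 * Q) := by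
        gcongr; nlinarith [mul_le_mul hpi1 hpi1 zero_le_one (by positivity : (0 : ℝ) ≤ π)]
    _ = 3 * π ^ 6 * Q * E / K := by ring

lemma fHk_eq (H : ℝ) (k : ℕ) (l : ℝ) :
    fHk H k l = Gamma (2 * H + 1) * sin (π * H) * ∑' j, fHkTerm H k l j := rfl

lemma fHinf_eq (H l : ℝ) :
    fHinf H l = 4 * Gamma (2 * H + 1) * sin (π * H) * (1 - cos l) ^ 2 * ∑' j, fHinfTerm H l j :=
  rfl

lemma abs_fHk_sub_fHinf_le {Hm H l : ℝ} {k : ℕ} (h0 : 0 < Hm) (hH : Hm ≤ H) (hH1 : H ≤ 1)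
    (hk : 0 < k) (hl0 : 0 < |l|) (hl : |l| ≤ π) :
    |fHk H k l - fHinf H l| ≤
      6 * π ^ 6 * (1 + 1 / (2 * Hm)) * |l| ^ min 2 (3 - 2 * H) / (k : ℝ) ^ min 1 (2 * H) := by
  have hH0 : 0 < H := h0.trans_le hH
  obtain ⟨hS0, hS⟩ := tsum_fHkTerm_sub_bounds hH0 hH1 hk (abs_pos.mp hl0) hl
  have hΓ0 : 0 < Gamma (2 * H + 1) := Gamma_pos_of_pos (by linarith)
  have hΓ2 : Gamma (2 * H + 1) ≤ 2 := Gamma_le_two ⟨by linarith, by linarith⟩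
  have hsin0 : 0 ≤ sin (π * H) :=
    sin_nonneg_of_nonneg_of_le_pi (by positivity) (by nlinarith [pi_pos])
  have hfactor : fHk H k l - fHinf H l = Gamma (2 * H + 1) * sin (π * H) *
      (∑' j, fHkTerm H k l j - 4 * (1 - cos l) ^ 2 * ∑' j, fHinfTerm H l j) := by
    rw [fHk_eq, fHinf_eq]; ring
  rw [hfactor, abs_of_nonneg (by positivity)]
  calc _ ≤ 2 * (3 * π ^ 6 * (1 + 1 / (2 * H)) * |l| ^ min 2 (3 - 2 * H) /
        (k : ℝ) ^ min 1 (2 * H)) :=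
      mul_le_mul ((mul_le_of_le_one_right hΓ0.le (sin_le_one _)).trans hΓ2)
        (hS.trans (error_bound_le_rpow_div_rpow hH0 hH1 hk hl0 hl)) hS0 zero_le_two
    _ = 6 * π ^ 6 * (1 + 1 / (2 * H)) * |l| ^ min 2 (3 - 2 * H) /
          (k : ℝ) ^ min 1 (2 * H) := by ring
    _ ≤ _ := by gcongr

lemma abs_fHk_sub_fHinf_le_rpow_neg {Hm H l : ℝ} {k : ℕ} (h0 : 0 < Hm) (hH : Hm ≤ H)
    (hH1 : H ≤ 1) (hk : 0 < k) (hl0 : 0 < |l|) (hl : |l| ≤ π) :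
    |fHk H k l - fHinf H l| ≤
      6 * π ^ 6 * (1 + 1 / (2 * Hm)) * π ^ 2 * (k : ℝ) ^ (-min 1 (2 * Hm)) := by
  have hk1 : (1 : ℝ) ≤ k := by exact_mod_cast hk
  have he : |l| ^ min 2 (3 - 2 * H) ≤ π ^ 2 := by
    simpa using rpow_le_pow_mul_rpow (c := 2) hl0 hl (by linarith [pi_gt_three])
      (le_min zero_le_two (by linarith)) (by push_cast; linarith [min_le_left 2 (3 - 2 * H)])
  refine (abs_fHk_sub_fHinf_le h0 hH hH1 hk hl0 hl).trans ?_
  rw [rpow_neg (by positivity), ← div_eq_mul_inv]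
  gcongr

theorem fHk_tendsto_fHinf_general (Hm Hp : ℝ) (h0 : 0 < Hm) (h1 : Hp < 1) :
    (∃ C : ℝ, 0 < C ∧ ∀ H ∈ Set.Icc Hm Hp, ∀ k : ℕ, 2 ≤ k → ∀ l : ℝ,
        0 < |l| → |l| ≤ π →
        |fHk H k l - fHinf H l|
          ≤ C * |l| ^ (min 2 (3 - 2 * H)) / (k : ℝ) ^ (min 1 (2 * H))) ∧
      (∀ ε : ℝ, 0 < ε → ∃ K : ℕ, ∀ k : ℕ, K ≤ k → ∀ H ∈ Set.Icc Hm Hp, ∀ l : ℝ,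
        0 < |l| → |l| ≤ π → |fHk H k l - fHinf H l| ≤ ε) := by
  refine ⟨⟨_, by positivity, fun H hH k hk l hl0 hl =>
    abs_fHk_sub_fHinf_le h0 hH.1 (by linarith [hH.2]) (by omega) hl0 hl⟩, fun ε hε => ?_⟩
  have hlim : Tendsto (fun k : ℕ => 6 * π ^ 6 * (1 + 1 / (2 * Hm)) * π ^ 2 *
      (k : ℝ) ^ (-min 1 (2 * Hm))) atTop (𝓝 0) := by
    simpa using ((tendsto_rpow_neg_atTop (lt_min one_pos (by linarith))).comp
      tendsto_natCast_atTop_atTop).const_mul (6 * π ^ 6 * (1 + 1 / (2 * Hm)) * π ^ 2)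
  obtain ⟨K, hK⟩ := eventually_atTop.mp
    ((hlim.eventually (ge_mem_nhds hε)).and (eventually_gt_atTop 0))
  exact ⟨K, fun k hk H hH l hl0 hl => (abs_fHk_sub_fHinf_le_rpow_neg h0 hH.1
    (by linarith [hH.2]) (hK k hk).2 hl0 hl).trans (hK k hk).1⟩

/-- There is a constant `C`, uniform in `H ∈ [H₋, H₊]` and `k ≥ 2`, such that
`|f_{H,k}(λ) - f_{H,∞}(λ)| ≤ C |λ|^{min(2, 3-2H)} / k^{min(1, 2H)}` for `0 < |λ| ≤ π`;
in particular `f_{H,k} → f_{H,∞}` uniformly in `H` and `λ ≠ 0` as `k → ∞`. -/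
theorem fHk_tendsto_fHinf (Hm Hp : ℝ) (h0 : 0 < Hm) (hmp : Hm ≤ Hp) (h1 : Hp < 1) :
    (∃ C : ℝ, 0 < C ∧ ∀ H ∈ Set.Icc Hm Hp, ∀ k : ℕ, 2 ≤ k → ∀ l : ℝ,
        0 < |l| → |l| ≤ π →
        |fHk H k l - fHinf H l|
          ≤ C * |l| ^ (min 2 (3 - 2 * H)) / (k : ℝ) ^ (min 1 (2 * H))) ∧
      (∀ ε : ℝ, 0 < ε → ∃ K : ℕ, ∀ k : ℕ, K ≤ k → ∀ H ∈ Set.Icc Hm Hp, ∀ l : ℝ,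
        0 < |l| → |l| ≤ π → |fHk H k l - fHinf H l| ≤ ε) :=
  fHk_tendsto_fHinf_general Hm Hp h0 h1
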